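/- Fix T > 0. Let N be a Poisson process with intensity λ > 0 under ℙ, λ̃ > 0, Z(t) = e^{(λ−λ̃)t}(λ̃/λ)^{N(t)}, and define the measure ℙ̃ on ℱ_T by dℙ̃ = Z(T) dℙ. Then under ℙ̃, the process (N(t), 0 ≤ t ≤ T) is a Poisson process with intensity λ̃. -/

import Mathlib

open MeasureTheory ProbabilityTheory
open scoped NNReal ENNReal Nat

noncomputable section

variable {Ω : Type*} {mΩ : MeasurableSpace Ω}

/-- `N` is a Poisson process with intensity `l` with respect to the filtration `𝓕`. -/
def IsPoissonProcess (P : Measure Ω) (𝓕 : Filtration ℝ≥0 mΩ) (N : ℝ≥0 → Ω → ℕ)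
    (l : ℝ≥0) : Prop :=
  (∀ ω, N 0 ω = 0) ∧
  (∀ ω, Monotone fun t => N t ω) ∧
  (∀ t, Measurable[𝓕 t] (N t)) ∧
  (∀ s t : ℝ≥0, s ≤ t →
    Indep (MeasurableSpace.comap (fun ω => N t ω - N s ω) inferInstance) (𝓕 s) P) ∧
  (∀ s t : ℝ≥0, s ≤ t →
    P.map (fun ω => N t ω - N s ω) = poissonMeasure (l * (t - s)))

/-- The density factor for a time increment of length `u`. -/
def Gd (l l' : ℝ≥0) (u : ℝ≥0) (n : ℕ) : ℝ≥0∞ :=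
  ENNReal.ofReal (Real.exp (((l : ℝ) - (l' : ℝ)) * u) * ((l' : ℝ) / l) ^ n)

lemma Gd_mul_pmf (l l' : ℝ≥0) (hl : 0 < l) (u : ℝ≥0) (n : ℕ) :
    Gd l l' u n * ENNReal.ofReal (poissonPMFReal (l * u) n)
      = ENNReal.ofReal (poissonPMFReal (l' * u) n) := by
  have hl0 : (l : ℝ) ≠ 0 := by exact_mod_cast hl.ne'
  rw [Gd, ← ENNReal.ofReal_mul (by positivity)]
  congr 1
  unfold poissonPMFReal
  push_cast
  have h1 : Real.exp (((l : ℝ) - l') * u) * Real.exp (-((l : ℝ) * u))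
      = Real.exp (-((l' : ℝ) * u)) := by
    rw [← Real.exp_add]; congr 1; ring
  have h2 : ((l' : ℝ) / l) ^ n * ((l : ℝ) * u) ^ n = ((l' : ℝ) * u) ^ n := by
    rw [← mul_pow]; congr 1; field_simp
  calc Real.exp (((l : ℝ) - l') * u) * ((l' : ℝ) / l) ^ n
        * (Real.exp (-((l : ℝ) * u)) * ((l : ℝ) * u) ^ n / n !)
      = (Real.exp (((l : ℝ) - l') * u) * Real.exp (-((l : ℝ) * u)))
        * (((l' : ℝ) / l) ^ n * ((l : ℝ) * u) ^ n) / n ! := by ring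
    _ = Real.exp (-((l' : ℝ) * u)) * ((l' : ℝ) * u) ^ n / n ! := by rw [h1, h2]

lemma lintegral_Gd_poisson (l l' : ℝ≥0) (hl : 0 < l) (u : ℝ≥0) (C : Set ℕ) :
    ∫⁻ n in C, Gd l l' u n ∂(poissonMeasure (l * u)) = poissonMeasure (l' * u) C := by
  have hC : MeasurableSet C := MeasurableSet.of_discrete
  rw [← lintegral_indicator hC, lintegral_countable']
  simp only [poissonMeasure]
  rw [Measure.sum_apply _ hC]
  refine tsum_congr fun n => ?_
  rw [Measure.sum_smul_dirac_singleton, Measure.smul_apply, Measure.dirac_apply' _ hC, smul_eq_mul]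
  by_cases hn : n ∈ C
  · rw [Set.indicator_of_mem hn, Set.indicator_of_mem hn, Pi.one_apply, mul_one]
    exact Gd_mul_pmf l l' hl u n
  · rw [Set.indicator_of_notMem hn, Set.indicator_of_notMem hn, zero_mul, mul_zero]

lemma setLIntegral_Gd (l l' : ℝ≥0) (hl : 0 < l) (u : ℝ≥0) (P : Measure Ω)
    (X : Ω → ℕ) (hX : Measurable X) (hmap : P.map X = poissonMeasure (l * u))
    (C : Set ℕ) :
    ∫⁻ ω in X ⁻¹' C, Gd l l' u (X ω) ∂P = poissonMeasure (l' * u) C := by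
  rw [← setLIntegral_map MeasurableSet.of_discrete measurable_from_nat hX, hmap]
  exact lintegral_Gd_poisson l l' hl u C

/-- change of Poisson intensity.  Under the measure `P̃` with density
`Z T = e^{(λ-λ̃)T}(λ̃/λ)^{N T}` with respect to `P`, the process `(N t, 0 ≤ t ≤ T)` is a
Poisson process with intensity `λ̃`. -/
theorem change_of_poisson_intensity
    (P : Measure Ω) [IsProbabilityMeasure P] (𝓕 : Filtration ℝ≥0 mΩ)
    (N : ℝ≥0 → Ω → ℕ) (l : ℝ≥0) (hl : 0 < l)
    (hN : IsPoissonProcess P 𝓕 N l)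
    (l' : ℝ≥0) (hl' : 0 < l') (T : ℝ≥0) (hT : 0 < T)
    (P' : Measure Ω)
    (hP' : P' = P.withDensity (fun ω =>
      ENNReal.ofReal (Real.exp (((l : ℝ) - (l' : ℝ)) * T) * ((l' : ℝ) / l) ^ (N T ω)))) :
    ∀ s t : ℝ≥0, s ≤ t → t ≤ T →
      (P'.map (fun ω => N t ω - N s ω) = poissonMeasure (l' * (t - s)) ∧
       Indep (MeasurableSpace.comap (fun ω => N t ω - N s ω) inferInstance) (𝓕 s) P') := by
  intro s t hst htT
  obtain ⟨h0, hmono, hadapt, hindep, hlaw⟩ := hN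
  have hsT : s ≤ T := hst.trans htT
  -- ambient measurability of N u
  have hNm : ∀ u : ℝ≥0, Measurable (N u) := fun u => (hadapt u).mono (𝓕.le u) le_rfl
  set X : Ω → ℕ := fun ω => N t ω - N s ω with hXdef
  set Y : Ω → ℕ := fun ω => N T ω - N t ω with hYdef
  have hXm : Measurable X := (hNm t).sub (hNm s)
  have hYm : Measurable Y := (hNm T).sub (hNm t)
  -- X measurable wrt 𝓕 t
  have hXft : Measurable[𝓕 t] X :=
    (hadapt t).sub ((hadapt s).mono (𝓕.mono hst) le_rfl)
  -- decomposition of the density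
  have hdec : ∀ ω, (ENNReal.ofReal (Real.exp (((l : ℝ) - (l' : ℝ)) * T)
        * ((l' : ℝ) / l) ^ (N T ω)))
      = Gd l l' (T - t) (Y ω) * Gd l l' (t - s) (X ω) * Gd l l' s (N s ω) := by
    intro ω
    simp only [Gd]
    rw [← ENNReal.ofReal_mul (by positivity), ← ENNReal.ofReal_mul (by positivity)]
    congr 1
    have hts : N s ω ≤ N t ω := hmono ω hst
    have htT' : N t ω ≤ N T ω := hmono ω htT
    have hsum : Y ω + X ω + N s ω = N T ω := by simp only [hXdef, hYdef]; omega
    have e1 : Real.exp (((l : ℝ) - l') * T)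
        = Real.exp (((l : ℝ) - l') * ((T - t : ℝ≥0) : ℝ))
          * Real.exp (((l : ℝ) - l') * ((t - s : ℝ≥0) : ℝ))
          * Real.exp (((l : ℝ) - l') * s) := by
      rw [← Real.exp_add, ← Real.exp_add]
      congr 1
      rw [NNReal.coe_sub htT, NNReal.coe_sub hst]
      ring
    have e2 : ((l' : ℝ) / l) ^ (N T ω)
        = ((l' : ℝ) / l) ^ (Y ω) * ((l' : ℝ) / l) ^ (X ω)
          * ((l' : ℝ) / l) ^ (N s ω) := by
      rw [← pow_add, ← pow_add, hsum]
    rw [e1, e2]; ring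
  -- the key computation
  have hkey : ∀ (C : Set ℕ) (A : Set Ω), MeasurableSet[𝓕 s] A →
      P' (X ⁻¹' C ∩ A)
        = poissonMeasure (l' * (t - s)) C * ∫⁻ ω in A, Gd l l' s (N s ω) ∂P := by
    intro C A hA
    have hAm : MeasurableSet A := 𝓕.le s A hA
    have hBm : MeasurableSet (X ⁻¹' C) := hXm MeasurableSet.of_discrete
    rw [hP', withDensity_apply _ (hBm.inter hAm), ← lintegral_indicator (hBm.inter hAm)]
    have heq : ∀ ω, (X ⁻¹' C ∩ A).indicator
          (fun ω => ENNReal.ofReal (Real.exp (((l : ℝ) - (l' : ℝ)) * T)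
            * ((l' : ℝ) / l) ^ (N T ω))) ω
        = (fun ω => Gd l l' (T - t) (Y ω)) ω
          * (((X ⁻¹' C).indicator (fun ω => Gd l l' (t - s) (X ω)) ω)
            * (A.indicator (fun ω => Gd l l' s (N s ω)) ω)) := by
      intro ω
      by_cases hB : ω ∈ X ⁻¹' C
      · by_cases hA' : ω ∈ A
        · rw [Set.indicator_of_mem (Set.mem_inter hB hA'), Set.indicator_of_mem hB,
            Set.indicator_of_mem hA', hdec ω]
          ring
        · rw [Set.indicator_of_notMem (fun h => hA' h.2), Set.indicator_of_notMem hA']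
          simp
      · rw [Set.indicator_of_notMem (fun h => hB h.1), Set.indicator_of_notMem hB]
        simp
    rw [lintegral_congr heq]
    -- independence of Y from 𝓕 t
    have hcomapY : MeasurableSpace.comap Y inferInstance ≤ mΩ :=
      hYm.comap_le
    have hYmm : Measurable[MeasurableSpace.comap Y inferInstance]
        (fun ω => Gd l l' (T - t) (Y ω)) :=
      (measurable_from_nat (f := Gd l l' (T - t))).comp (Measurable.of_comap_le le_rfl)
    have hBtm : MeasurableSet[𝓕 t] (X ⁻¹' C) := hXft MeasurableSet.of_discrete
    have hAtm : MeasurableSet[𝓕 t] A := 𝓕.mono hst A hA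
    have hg2 : Measurable[𝓕 t] (fun ω =>
        (X ⁻¹' C).indicator (fun ω => Gd l l' (t - s) (X ω)) ω
          * A.indicator (fun ω => Gd l l' s (N s ω)) ω) := by
      exact Measurable.mul
        (Measurable.indicator ((measurable_from_nat (f := Gd l l' (t - s))).comp hXft) hBtm)
        (Measurable.indicator
          ((measurable_from_nat (f := Gd l l' s)).comp ((hadapt s).mono (𝓕.mono hst) le_rfl)) hAtm)
    rw [lintegral_mul_eq_lintegral_mul_lintegral_of_independent_measurableSpace
      hcomapY (𝓕.le t) (hindep t T htT) hYmm hg2]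
    -- second factorization
    have hBcomap : MeasurableSet[MeasurableSpace.comap X inferInstance] (X ⁻¹' C) :=
      ⟨C, MeasurableSet.of_discrete, rfl⟩
    have hf2 : Measurable[MeasurableSpace.comap X inferInstance]
        ((X ⁻¹' C).indicator (fun ω => Gd l l' (t - s) (X ω))) :=
      Measurable.indicator ((measurable_from_nat (f := Gd l l' (t - s))).comp (Measurable.of_comap_le le_rfl)) hBcomap
    have hf3 : Measurable[𝓕 s] (A.indicator (fun ω => Gd l l' s (N s ω))) :=
      Measurable.indicator ((measurable_from_nat (f := Gd l l' s)).comp (hadapt s)) hA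
    rw [lintegral_mul_eq_lintegral_mul_lintegral_of_independent_measurableSpace
      hXm.comap_le (𝓕.le s) (hindep s t hst) hf2 hf3]
    -- evaluate the three integrals
    have i1 : ∫⁻ ω, Gd l l' (T - t) (Y ω) ∂P = 1 := by
      have := setLIntegral_Gd l l' hl (T - t) P Y hYm (hlaw t T htT) Set.univ
      rw [Set.preimage_univ, setLIntegral_univ] at this
      rw [this, measure_univ]
    have i2 : ∫⁻ ω, (X ⁻¹' C).indicator (fun ω => Gd l l' (t - s) (X ω)) ω ∂P
        = poissonMeasure (l' * (t - s)) C := by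
      rw [lintegral_indicator (hXm MeasurableSet.of_discrete)]
      exact setLIntegral_Gd l l' hl (t - s) P X hXm (hlaw s t hst) C
    have i3 : ∫⁻ ω, A.indicator (fun ω => Gd l l' s (N s ω)) ω ∂P
        = ∫⁻ ω in A, Gd l l' s (N s ω) ∂P := lintegral_indicator hAm _
    rw [i1, i2, i3, one_mul]
  -- the law of N s
  have hNs_law : P.map (N s) = poissonMeasure (l * s) := by
    have := hlaw 0 s (zero_le)
    have hfun : (fun ω => N s ω - N 0 ω) = N s := by
      funext ω; rw [h0 ω, Nat.sub_zero]
    rwa [hfun, tsub_zero] at this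
  have hGs1 : ∫⁻ ω, Gd l l' s (N s ω) ∂P = 1 := by
    have := setLIntegral_Gd l l' hl s P (N s) (hNm s) hNs_law Set.univ
    rw [Set.preimage_univ, setLIntegral_univ] at this
    rw [this, measure_univ]
  -- P' of sets in 𝓕 s
  have hPA : ∀ A : Set Ω, MeasurableSet[𝓕 s] A →
      P' A = ∫⁻ ω in A, Gd l l' s (N s ω) ∂P := by
    intro A hA
    have := hkey Set.univ A hA
    rwa [Set.preimage_univ, Set.univ_inter, measure_univ, one_mul] at this
  -- P' of X ⁻¹' C
  have hPB : ∀ C : Set ℕ, P' (X ⁻¹' C) = poissonMeasure (l' * (t - s)) C := by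
    intro C
    have := hkey C Set.univ MeasurableSet.univ
    rwa [Set.inter_univ, setLIntegral_univ, hGs1, mul_one] at this
  constructor
  · refine Measure.ext fun C hC => ?_
    rw [Measure.map_apply hXm hC]
    exact hPB C
  · rw [Indep_iff]
    rintro t1 t2 ⟨C, -, rfl⟩ h2
    rw [hkey C t2 h2, hPB C, ← hPA t2 h2]
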